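/- arXiv:math/0303011 — 6 statements merged into one kernel-verified Lean document; each statement's English description precedes it below -/
import Mathlib

section
/- Every uncountable closed subset V of the real interval [0,1] contains a countable subset S with at least two elements that is densely ordered in itself. -/
/-- A set `S ⊆ ℝ` is densely ordered in itself if between any two of its
elements there is a third. -/
def DenselyOrderedIn (S : Set ℝ) : Prop :=
  ∀ u ∈ S, ∀ v ∈ S, u < v → ∃ w ∈ S, u < w ∧ w < v

open Set Filter Topology

/-- Dyadic grid construction: `Fgrid g a b n k` is the point at position `k/2^n`. -/
noncomputable def Fgrid (g : ℝ → ℝ → ℝ) (a b : ℝ) : ℕ → ℕ → ℝ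
  | 0, k => if k = 0 then a else b
  | (n+1), k =>
      if k % 2 = 0 then Fgrid g a b n (k / 2)
      else g (Fgrid g a b n (k / 2)) (Fgrid g a b n (k / 2 + 1))

lemma three_in_open {D U : Set ℝ} (hP : Perfect D) {x : ℝ} (hx : x ∈ D)
    (hU : IsOpen U) (hxU : x ∈ U) :
    ∃ y z, y ∈ D ∩ U ∧ z ∈ D ∩ U ∧ x ≠ y ∧ x ≠ z ∧ y ≠ z := by
  have hacc := hP.acc x hx
  rw [accPt_iff_nhds] at hacc
  obtain ⟨y, hy, hyx⟩ := hacc U (hU.mem_nhds hxU)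
  have hU2 : IsOpen (U \ {y}) := hU.sdiff isClosed_singleton
  have hxU2 : x ∈ U \ {y} := ⟨hxU, by simpa using hyx.symm⟩
  obtain ⟨z, hz, hzx⟩ := hacc (U \ {y}) (hU2.mem_nhds hxU2)
  exact ⟨y, z, ⟨hy.2, hy.1⟩, ⟨hz.2, hz.1.1⟩, (Ne.symm hyx), (Ne.symm hzx),
    fun h => hz.1.2 (by simp [h.symm])⟩

lemma middle_of_three {T : Set ℝ} {x y z : ℝ} (hx : x ∈ T) (hy : y ∈ T) (hz : z ∈ T)
    (hxy : x ≠ y) (hxz : x ≠ z) (hyz : y ≠ z) :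
    ∃ a b c, a ∈ T ∧ b ∈ T ∧ c ∈ T ∧ a < b ∧ b < c := by
  rcases hxy.lt_or_gt with h1|h1 <;> rcases hxz.lt_or_gt with h2|h2 <;>
    rcases hyz.lt_or_gt with h3|h3
  · exact ⟨x, y, z, hx, hy, hz, h1, h3⟩
  · exact ⟨x, z, y, hx, hz, hy, h2, h3⟩
  · exact absurd h3 (by linarith)
  · exact ⟨z, x, y, hz, hx, hy, h2, h1⟩
  · exact ⟨y, x, z, hy, hx, hz, h1, h2⟩
  · exact absurd h3 (by linarith)
  · exact ⟨y, z, x, hy, hz, hx, h3, h2⟩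
  · exact ⟨z, y, x, hz, hy, hx, h3, h1⟩

theorem uncountable_closed_contains_countable_dense_subset
    (V : Set ℝ) (hVsub : V ⊆ Set.Icc 0 1) (hVclosed : IsClosed V)
    (hV : ¬ V.Countable) :
    ∃ S, S ⊆ V ∧ S.Countable ∧ S.Nontrivial ∧ DenselyOrderedIn S := by
  obtain ⟨C, D, hCc, hD, hVeq⟩ := exists_countable_union_perfect_of_isClosed hVclosed
  have hDV : D ⊆ V := by rw [hVeq]; exact subset_union_right
  have hDunc : ¬ D.Countable := fun h => hV (hVeq ▸ hCc.union h)
  have hDne : D.Nonempty :=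
    nonempty_iff_ne_empty.2 (fun h => hDunc (h ▸ countable_empty))
  set Good : ℝ → ℝ → Prop :=
    fun u v => u ∈ D ∧ v ∈ D ∧ u < v ∧ (D ∩ Set.Ioo u v).Nonempty with hGoodDef
  -- splitting of a good pair
  have split : ∀ u v, Good u v → ∃ w, Good u w ∧ Good w v := by
    rintro u v ⟨hu, hv, huv, x, hxD, hxI⟩
    obtain ⟨y, z, hy, hz, hxy, hxz, hyz⟩ := three_in_open hD hxD isOpen_Ioo hxI
    obtain ⟨a, b, c, ha, hb, hc, hab, hbc⟩ :=
      middle_of_three (T := D ∩ Set.Ioo u v) ⟨hxD, hxI⟩ hy hz hxy hxz hyz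
    refine ⟨b, ⟨hu, hb.1, hb.2.1, ⟨a, ha.1, ha.2.1, hab⟩⟩,
      ⟨hb.1, hv, hb.2.2, ⟨c, hc.1, hbc, hc.2.2⟩⟩⟩
  have split' : ∀ u v, ∃ w, Good u v → Good u w ∧ Good w v := by
    intro u v
    by_cases h : Good u v
    · exact (split u v h).imp (fun w hw _ => hw)
    · exact ⟨0, fun h' => absurd h' h⟩
  choose g hg using split'
  -- initial good pair
  obtain ⟨x0, hx0⟩ := hDne
  obtain ⟨y0, z0, hy0, hz0, h1, h2, h3⟩ :=
    three_in_open hD hx0 isOpen_univ (mem_univ x0)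
  obtain ⟨a0, b0, c0, ha0, hb0, hc0, hab0, hbc0⟩ :=
    middle_of_three (T := D) hx0 hy0.1 hz0.1 h1 h2 h3
  have hGood0 : Good a0 c0 := ⟨ha0, hc0, hab0.trans hbc0, ⟨b0, hb0, hab0, hbc0⟩⟩
  set F : ℕ → ℕ → ℝ := Fgrid g a0 c0 with hF
  have hF00 : F 0 0 = a0 := by simp [hF, Fgrid]
  have hF01 : F 0 1 = c0 := by simp [hF, Fgrid]
  have heven : ∀ n j, F (n+1) (2*j) = F n j := by
    intro n j
    have h2 : (2*j) % 2 = 0 := by omega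
    have h3 : 2*j/2 = j := by omega
    simp [hF, Fgrid, h2, h3]
  have hodd : ∀ n j, F (n+1) (2*j+1) = g (F n j) (F n (j+1)) := by
    intro n j
    have h2 : (2*j+1) % 2 = 1 := by omega
    have h3 : (2*j+1)/2 = j := by omega
    simp [hF, Fgrid, h2, h3]
  -- adjacency invariant
  have hAdj : ∀ n k, k < 2^n → Good (F n k) (F n (k+1)) := by
    intro n
    induction n with
    | zero =>
      intro k hk
      interval_cases k
      rw [hF00, hF01]; exact hGood0
    | succ n ih =>
      intro k hk
      rcases Nat.even_or_odd k with ⟨j, hj⟩ | ⟨j, hj⟩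
      · subst hj
        have hjlt : j < 2^n := by
          have : 2^(n+1) = 2^n * 2 := pow_succ 2 n
          omega
        have e1 : j + j = 2 * j := by omega
        rw [e1, heven, hodd]
        exact (hg _ _ (ih j hjlt)).1
      · subst hj
        have hjlt : j < 2^n := by
          have : 2^(n+1) = 2^n * 2 := pow_succ 2 n
          omega
        have e2 : 2*j+1+1 = 2*(j+1) := by omega
        rw [e2, heven, hodd]
        exact (hg _ _ (ih j hjlt)).2
  -- strict monotonicity
  have hchain : ∀ n d i, i + d < 2^n → F n i < F n (i + d + 1) := by
    intro n d
    induction d with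
    | zero => intro i hi; simpa using (hAdj n i (by omega)).2.2.1
    | succ d ih =>
      intro i hi
      have h1 : F n i < F n (i + d + 1) := ih i (by omega)
      have h2 : F n (i + d + 1) < F n (i + d + 1 + 1) := (hAdj n (i+d+1) (by omega)).2.2.1
      have e : i + (d+1) + 1 = i + d + 1 + 1 := by omega
      rw [e]; exact h1.trans h2
  have hmono : ∀ n i j, i < j → j ≤ 2^n → F n i < F n j := by
    intro n i j hij hj
    have e : j = i + (j - i - 1) + 1 := by omega
    rw [e]; exact hchain n (j - i - 1) i (by omega)
  -- membership
  have hmem : ∀ n k, k ≤ 2^n → F n k ∈ D := by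
    intro n k hk
    have hpos : 0 < 2^n := pow_pos (by norm_num) n
    rcases eq_or_lt_of_le hk with h | h
    · have e : k = (2^n - 1) + 1 := by omega
      rw [e]; exact (hAdj n (2^n - 1) (by omega)).2.1
    · exact (hAdj n k h).1
  -- lifting to finer grids
  have hlift : ∀ p n k, F (n + p) (k * 2^p) = F n k := by
    intro p
    induction p with
    | zero => intro n k; simp
    | succ p ih =>
      intro n k
      have e : k * 2^(p+1) = 2 * (k * 2^p) := by ring
      have e2 : n + (p+1) = (n + p) + 1 := by omega
      rw [e, e2, heven, ih]
  refine ⟨{x : ℝ | ∃ n k, k ≤ 2^n ∧ F n k = x}, ?_, ?_, ?_, ?_⟩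
  · rintro x ⟨n, k, hk, rfl⟩
    exact hDV (hmem n k hk)
  · apply Set.Countable.mono ?_ (Set.countable_range (fun p : ℕ × ℕ => F p.1 p.2))
    rintro x ⟨n, k, _, rfl⟩
    exact ⟨(n, k), rfl⟩
  · exact ⟨a0, ⟨0, 0, by norm_num, hF00⟩, c0, ⟨0, 1, by norm_num, hF01⟩,
      ne_of_lt (hab0.trans hbc0)⟩
  · rintro u ⟨n, k, hk, rfl⟩ v ⟨n', k', hk', rfl⟩ huv
    set N := max n n' with hN
    have hn : n ≤ N := le_max_left _ _
    have hn' : n' ≤ N := le_max_right _ _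
    set i := k * 2^(N - n) with hi
    set j := k' * 2^(N - n') with hj
    have hFi : F N i = F n k := by
      have := hlift (N - n) n k
      rwa [show n + (N - n) = N by omega] at this
    have hFj : F N j = F n' k' := by
      have := hlift (N - n') n' k'
      rwa [show n' + (N - n') = N by omega] at this
    have hile : i ≤ 2^N := by
      calc i ≤ 2^n * 2^(N-n) := Nat.mul_le_mul_right _ hk
      _ = 2^N := by rw [← pow_add]; congr 1; omega
    have hjle : j ≤ 2^N := by
      calc j ≤ 2^n' * 2^(N-n') := Nat.mul_le_mul_right _ hk'
      _ = 2^N := by rw [← pow_add]; congr 1; omega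
    have hij : i < j := by
      rcases lt_trichotomy i j with h | h | h
      · exact h
      · rw [← hFi, ← hFj, h] at huv; exact absurd huv (lt_irrefl _)
      · have := hmono N j i h hile
        rw [hFi, hFj] at this; exact absurd huv (by linarith)
    have h2N : 2^(N+1) = 2^N * 2 := pow_succ 2 N
    refine ⟨F (N+1) (2*i+1), ⟨N+1, 2*i+1, by omega, rfl⟩, ?_, ?_⟩
    · have := hmono (N+1) (2*i) (2*i+1) (by omega) (by omega)
      rw [heven, hFi] at this; exact this
    · have := hmono (N+1) (2*i+1) (2*j) (by omega) (by omega)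
      rw [heven, hFj] at this; exact this
end

section
/- For every nonempty set A ⊆ V_↑ one has sSup { gimp a (sInf A) | a ∈ A } = 1. (This expresses that the formula C_↑ = ∃x(A(x) → ∀y A(y)) is valid in the Gödel logic G_↑: for any distribution A of truth values of A(x), the value of C_↑ is the supremum over a ∈ A of the Gödel implication from a to the infimum of A.) -/
/-- The Gödel implication. -/
noncomputable def gimp (a b : ℝ) : ℝ := if a ≤ b then 1 else b

/-- The truth value set `V_↑ = {1 - 1/k : k ≥ 1} ∪ {1}` of the Gödel logic `G_↑`. -/
def Vup : Set ℝ := {x | ∃ k : ℕ, 1 ≤ k ∧ x = 1 - 1 / (k : ℝ)} ∪ {1}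

lemma Vup_le_one {x : ℝ} (hx : x ∈ Vup) : x ≤ 1 := by
  rcases hx with ⟨k, hk, rfl⟩ | h
  · have : (0:ℝ) ≤ 1 / (k:ℝ) := by positivity
    linarith
  · simp_all

lemma exists_least (A : Set ℝ) (hA : A ⊆ Vup) (hne : A.Nonempty) : ∃ a ∈ A, ∀ b ∈ A, a ≤ b := by
  by_cases h : ∃ k : ℕ, 1 ≤ k ∧ (1 - 1/(k:ℝ)) ∈ A
  · classical
    let m := Nat.find h
    obtain ⟨hm1, hmA⟩ := Nat.find_spec h
    refine ⟨1 - 1/(m:ℝ), hmA, ?_⟩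
    intro b hb
    rcases hA hb with ⟨j, hj, rfl⟩ | hb1
    · have hmj : m ≤ j := Nat.find_min' h ⟨hj, hb⟩
      have hm0 : (0:ℝ) < m := by exact_mod_cast hm1
      have : 1/(j:ℝ) ≤ 1/(m:ℝ) := by
        apply one_div_le_one_div_of_le hm0
        exact_mod_cast hmj
      linarith
    · have : b = 1 := hb1
      subst this
      have : (0:ℝ) ≤ 1/(m:ℝ) := by positivity
      linarith
  · obtain ⟨a, ha⟩ := hne
    refine ⟨a, ha, ?_⟩
    intro b hb
    have hb1 : b = 1 := by
      rcases hA hb with ⟨k, hk, rfl⟩ | h1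
      · exact absurd ⟨k, hk, hb⟩ h
      · exact h1
    subst hb1
    exact Vup_le_one (hA ha)

theorem Cup_valid_in_Gup (A : Set ℝ) (hA : A ⊆ Vup) (hne : A.Nonempty) :
    sSup ((fun a => gimp a (sInf A)) '' A) = 1 := by
  obtain ⟨a, haA, hleast⟩ := exists_least A hA hne
  have hinf : sInf A = a := le_antisymm (csInf_le ⟨a, hleast⟩ haA) (le_csInf hne hleast)
  have h1mem : (1:ℝ) ∈ (fun a => gimp a (sInf A)) '' A := by
    refine ⟨a, haA, ?_⟩
    simp [gimp, hinf]
  have hub : ∀ x ∈ (fun a => gimp a (sInf A)) '' A, x ≤ 1 := by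
    rintro x ⟨b, hb, rfl⟩
    simp only [gimp]
    split
    · exact le_refl 1
    · rw [hinf]; exact Vup_le_one (hA haA)
  refine le_antisymm (csSup_le ⟨1, h1mem⟩ hub) (le_csSup ⟨1, hub⟩ h1mem)
end

section
/- For every nonempty set A ⊆ V_↓ one has sSup { gimp (sSup A) a | a ∈ A } = 1. (This expresses that the formula C_↓ = ∃x(∃y A(y) → A(x)) is valid in the Gödel logic G_↓.) -/
/-- The truth value set `V_↓ = {1/k : k ≥ 1} ∪ {0}` of the Gödel logic `G_↓`. -/
def Vdn : Set ℝ := {x | ∃ k : ℕ, 1 ≤ k ∧ x = 1 / (k : ℝ)} ∪ {0}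

lemma Vdn_le_one {x : ℝ} (hx : x ∈ Vdn) : x ≤ 1 := by
  rcases hx with ⟨k, hk, rfl⟩ | h
  · rw [div_le_one (by positivity)]
    exact_mod_cast hk
  · simp only [Set.mem_singleton_iff] at h; simp [h]

lemma sSup_mem_of_subset_Vdn (A : Set ℝ) (hA : A ⊆ Vdn) (hne : A.Nonempty) :
    sSup A ∈ A := by
  by_cases h : ∃ k : ℕ, 1 ≤ k ∧ (1 / (k : ℝ)) ∈ A
  · classical
    have hP : ∃ k : ℕ, 1 ≤ k ∧ (1 / (k : ℝ)) ∈ A := h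
    let m := Nat.find hP
    obtain ⟨hm1, hmA⟩ := Nat.find_spec hP
    have hsup : sSup A = 1 / (m : ℝ) := by
      apply le_antisymm
      · apply csSup_le hne
        intro a ha
        rcases hA ha with ⟨j, hj, rfl⟩ | h0
        · have hjm : m ≤ j := by
            by_contra hlt
            push_neg at hlt
            exact Nat.find_min hP hlt ⟨hj, ha⟩
          apply one_div_le_one_div_of_le
          · positivity
          · exact_mod_cast hjm
        · simp only [Set.mem_singleton_iff] at h0
          rw [h0]; positivity
      · apply le_csSup _ hmA
        exact ⟨1, fun x hx => Vdn_le_one (hA hx)⟩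
    rw [hsup]; exact hmA
  · push_neg at h
    have hA0 : A = {0} := by
      apply Set.eq_singleton_iff_nonempty_unique_mem.mpr
      refine ⟨hne, fun a ha => ?_⟩
      rcases hA ha with ⟨k, hk, rfl⟩ | h0
      · exact absurd ha (h k hk)
      · exact h0
    rw [hA0]
    simp

theorem Cdn_valid_in_Gdn (A : Set ℝ) (hA : A ⊆ Vdn) (hne : A.Nonempty) :
    sSup ((fun a => gimp (sSup A) a) '' A) = 1 := by
  have hs : sSup A ∈ A := sSup_mem_of_subset_Vdn A hA hne
  apply le_antisymm
  · apply csSup_le (hne.image _)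
    rintro x ⟨a, ha, rfl⟩
    simp only [gimp]
    split
    · exact le_refl 1
    · exact Vdn_le_one (hA ha)
  · apply le_csSup
    · refine ⟨1, ?_⟩
      rintro x ⟨a, ha, rfl⟩
      simp only [gimp]
      split
      · exact le_refl 1
      · exact Vdn_le_one (hA ha)
    · refine ⟨sSup A, hs, ?_⟩
      simp [gimp]
end

section
/- For every nonempty set A ⊆ V_↑ one has sSup { gimp (sSup A) a | a ∈ A } = 1. (This expresses that the formula C_↓ = ∃x(∃y A(y) → A(x)) is valid in the Gödel logic G_↑.) -/
theorem Cdn_valid_in_Gup (A : Set ℝ) (hA : A ⊆ Vup) (hne : A.Nonempty) :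
    sSup ((fun a => gimp (sSup A) a) '' A) = 1 := by
  have hle1 : ∀ x ∈ A, x ≤ 1 := by
    intro x hx
    rcases hA hx with ⟨k, hk, rfl⟩ | h
    · have : (0:ℝ) ≤ 1 / (k:ℝ) := by positivity
      linarith
    · simp only [Set.mem_singleton_iff] at h
      simp [h]
  set s := sSup A with hs
  have hs1 : s ≤ 1 := csSup_le hne hle1
  have himub : ∀ y ∈ (fun a => gimp s a) '' A, y ≤ 1 := by
    rintro y ⟨a, ha, rfl⟩
    simp only [gimp]
    split
    · exact le_refl 1
    · exact hle1 a ha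
  by_cases hmem : s ∈ A
  · have h1 : (1:ℝ) ∈ (fun a => gimp s a) '' A := ⟨s, hmem, by simp [gimp]⟩
    exact le_antisymm (csSup_le ⟨1, h1⟩ himub) (le_csSup ⟨1, himub⟩ h1)
  · have hseq : s = 1 := by
      by_contra h
      have hlt : s < 1 := lt_of_le_of_ne hs1 h
      have hfin : A.Finite := by
        apply Set.Finite.subset
          (Set.Finite.image (fun k : ℕ => 1 - 1/(k:ℝ)) (Set.finite_Iic ⌈1/(1-s)⌉₊))
        intro x hx
        have hxs : x ≤ s := le_csSup ⟨1, hle1⟩ hx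
        rcases hA hx with ⟨k, hk, rfl⟩ | hx1
        · refine ⟨k, ?_, rfl⟩
          have hk0 : (0:ℝ) < (k:ℝ) := by exact_mod_cast hk
          have h1k : 1 - s ≤ 1/(k:ℝ) := by linarith
          have hkr : (k:ℝ) ≤ 1/(1-s) := by
            rw [le_div_iff₀ (by linarith)]
            rw [le_div_iff₀ hk0] at h1k
            linarith
          have : (k:ℝ) ≤ (⌈1/(1-s)⌉₊ : ℝ) := hkr.trans (Nat.le_ceil _)
          exact Set.mem_Iic.mpr (by exact_mod_cast this)
        · simp only [Set.mem_singleton_iff] at hx1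
          exfalso; linarith [hx1 ▸ hxs]
      exact hmem (hne.csSup_mem hfin)
    have himg : (fun a => gimp s a) '' A = A := by
      have hcong : ∀ a ∈ A, gimp s a = id a := by
        intro a ha
        have halt : a < 1 := lt_of_le_of_ne (hle1 a ha)
          (fun he => hmem (by rw [hseq, ← he]; exact ha))
        simp [gimp, hseq, not_le.mpr halt]
      rw [Set.image_congr hcong, Set.image_id]
    rw [himg, ← hs, hseq]
end

section
/- There exist nonempty sets A, B ⊆ [0,1] such that sSup { gimp a (sInf A) | a ∈ A } < 1 and sSup { gimp (sSup B) b | b ∈ B } < 1. (This expresses that neither C_↑ = ∃x(A(x) → ∀y A(y)) nor C_↓ = ∃x(∃y A(y) → A(x)) is valid in the Gödel logic G_ℝ based on the full truth value set [0,1].) -/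
theorem Cup_Cdn_not_valid_in_GR :
    ∃ A B : Set ℝ, A ⊆ Set.Icc 0 1 ∧ A.Nonempty ∧ B ⊆ Set.Icc 0 1 ∧ B.Nonempty ∧
      sSup ((fun a => gimp a (sInf A)) '' A) < 1 ∧
      sSup ((fun b => gimp (sSup B) b) '' B) < 1 := by
  refine ⟨Set.Ioc 0 (1/2), Set.Ico 0 (1/2), ?_, ?_, ?_, ?_, ?_, ?_⟩
  · intro x hx; exact ⟨le_of_lt hx.1, hx.2.trans (by norm_num)⟩
  · exact ⟨1/2, by norm_num, le_refl _⟩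
  · intro x hx; exact ⟨hx.1, hx.2.le.trans (by norm_num)⟩
  · exact ⟨0, le_refl _, by norm_num⟩
  · have hinf : sInf (Set.Ioc (0:ℝ) (1/2)) = 0 := by
      rw [csInf_Ioc (by norm_num)]
    have himg : (fun a => gimp a (sInf (Set.Ioc (0:ℝ) (1/2)))) '' Set.Ioc 0 (1/2) = {0} := by
      rw [hinf]
      ext y
      constructor
      · rintro ⟨a, ha, rfl⟩
        simp [gimp, not_le.mpr ha.1]
      · rintro rfl
        exact ⟨1/2, ⟨by norm_num, le_refl _⟩, by simp [gimp]⟩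
    rw [himg]; norm_num
  · have hsup : sSup (Set.Ico (0:ℝ) (1/2)) = 1/2 := by
      rw [csSup_Ico (by norm_num)]
    have himg : (fun b => gimp (sSup (Set.Ico (0:ℝ) (1/2))) b) '' Set.Ico 0 (1/2)
        = Set.Ico 0 (1/2) := by
      rw [hsup]
      ext y
      constructor
      · rintro ⟨b, hb, rfl⟩
        simp only [gimp]
        rw [if_neg (not_le.mpr hb.2)]
        exact hb
      · intro hy
        exact ⟨y, hy, by simp only [gimp]; rw [if_neg (not_le.mpr hy.2)]⟩
    rw [himg, hsup]; norm_num
end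

section
/- Let m ≥ 2 and let V_m = {1 − 1/k : k ∈ ℕ, 1 ≤ k ≤ m−1} ∪ {1} (an m-element set). Then: (a) for every function a : Fin (m+1) → ℝ with a i ∈ V_m for all i, there exists i : Fin m with a i.castSucc ≤ a i.succ, so that the maximum over i : Fin m of gimp (a i.castSucc) (a i.succ) equals 1; and (b) there exists a function a : Fin (m+1) → ℝ with a i ∈ V_{m+1} for all i such that gimp (a i.castSucc) (a i.succ) < 1 for every i : Fin m. (This expresses that the formula (A₁ → A₂) ∨ … ∨ (A_m → A_{m+1}) is valid in the m-valued Gödel logic G_m but not in G_{m+1}, hence G_m ⊋ G_{m+1}.) -/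
/-- The `m`-element truth value set `V_m = {1 - 1/k : 1 ≤ k ≤ m - 1} ∪ {1}`
of the finite-valued Gödel logic `G_m`. -/
def Vfin (m : ℕ) : Set ℝ := {x | ∃ k : ℕ, 1 ≤ k ∧ k ≤ m - 1 ∧ x = 1 - 1 / (k : ℝ)} ∪ {1}

lemma Vfin_le_one {m : ℕ} {x : ℝ} (hx : x ∈ Vfin m) : x ≤ 1 := by
  rcases hx with ⟨k, hk1, hk2, rfl⟩ | h
  · have : (0:ℝ) ≤ 1 / (k:ℝ) := by positivity
    linarith
  · simp_all

lemma gimp_le_one {a b : ℝ} (hb : b ≤ 1) : gimp a b ≤ 1 := by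
  unfold gimp; split <;> simp [hb]

theorem Gm_proper_superset_Gm_succ (m : ℕ) (hm : 2 ≤ m) :
    (∀ a : Fin (m + 1) → ℝ, (∀ i, a i ∈ Vfin m) →
      (∃ i : Fin m, a i.castSucc ≤ a i.succ) ∧
      (⨆ i : Fin m, gimp (a i.castSucc) (a i.succ)) = 1) ∧
    (∃ a : Fin (m + 1) → ℝ, (∀ i, a i ∈ Vfin (m + 1)) ∧
      ∀ i : Fin m, gimp (a i.castSucc) (a i.succ) < 1) := by
  have hmpos : 0 < m := by omega
  constructor
  · intro a ha
    have hne : Nonempty (Fin m) := ⟨⟨0, hmpos⟩⟩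
    have hex : ∃ i : Fin m, a i.castSucc ≤ a i.succ := by
      by_contra h
      push_neg at h
      have hanti : StrictAnti a := Fin.strictAnti_iff_succ_lt.2 h
      -- a is injective into Vfin m which has ≤ m elements
      set S : Finset ℝ := ((Finset.Icc 1 (m-1)).image (fun k : ℕ => 1 - 1/(k:ℝ))) ∪ {1} with hS
      have hmaps : ∀ i, a i ∈ S := by
        intro i
        rcases ha i with ⟨k, hk1, hk2, hk3⟩ | h1
        · apply Finset.mem_union_left
          exact Finset.mem_image.2 ⟨k, Finset.mem_Icc.2 ⟨hk1, hk2⟩, hk3.symm⟩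
        · exact Finset.mem_union_right _ (by simpa using h1)
      have hcard : S.card ≤ m := by
        calc S.card ≤ ((Finset.Icc 1 (m-1)).image (fun k : ℕ => 1 - 1/(k:ℝ))).card + 1 :=
              le_trans (Finset.card_union_le _ _) (by simp)
        _ ≤ (Finset.Icc 1 (m-1)).card + 1 := by
              have := Finset.card_image_le (s := Finset.Icc 1 (m-1))
                (f := fun k : ℕ => 1 - 1/(k:ℝ))
              omega
        _ ≤ m := by rw [Nat.card_Icc]; omega
      have : (Finset.univ : Finset (Fin (m+1))).card ≤ S.card :=
        Finset.card_le_card_of_injOn a (fun i _ => hmaps i)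
          (fun i _ j _ hij => hanti.injective hij)
      simp [Finset.card_univ] at this
      omega
    refine ⟨hex, ?_⟩
    obtain ⟨i, hi⟩ := hex
    apply le_antisymm
    · exact ciSup_le fun j => gimp_le_one (Vfin_le_one (ha j.succ))
    · have h1 : gimp (a i.castSucc) (a i.succ) = 1 := if_pos hi
      calc (1:ℝ) = gimp (a i.castSucc) (a i.succ) := h1.symm
      _ ≤ _ := le_ciSup (f := fun j : Fin m => gimp (a j.castSucc) (a j.succ)) (Set.Finite.bddAbove (Set.finite_range _)) i
  · -- part b
    refine ⟨fun i => if (i:ℕ) = 0 then 1 else 1 - 1/((m + 1 - (i:ℕ) : ℕ) : ℝ), ?_, ?_⟩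
    · intro i
      by_cases h : (i:ℕ) = 0
      · simp [h, Vfin]
      · have hi : (i:ℕ) ≤ m := by omega
        left
        refine ⟨m + 1 - (i:ℕ), by omega, by omega, by simp [h]⟩
    · intro i
      have hi : (i:ℕ) < m := i.isLt
      have hcs : ((i.castSucc : Fin (m+1)) : ℕ) = (i:ℕ) := rfl
      have hsc : ((i.succ : Fin (m+1)) : ℕ) = (i:ℕ) + 1 := rfl
      have hks : m + 1 - ((i:ℕ)+1) = m - (i:ℕ) := by omega
      have hkpos : 1 ≤ m - (i:ℕ) := by omega
      have hsuccval : (1 : ℝ) - 1/((m - (i:ℕ) : ℕ) : ℝ) < 1 := by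
        have : (0:ℝ) < ((m - (i:ℕ) : ℕ) : ℝ) := by exact_mod_cast hkpos
        have : (0:ℝ) < 1/((m - (i:ℕ) : ℕ) : ℝ) := by positivity
        linarith
      unfold gimp
      simp only [hcs, hsc]
      rw [if_neg (by omega : ¬ ((i:ℕ) + 1 = 0)), hks]
      have hYX : (1 : ℝ) - 1/((m - (i:ℕ) : ℕ) : ℝ) <
          (if (i:ℕ) = 0 then (1:ℝ) else 1 - 1/((m + 1 - (i:ℕ) : ℕ) : ℝ)) := by
        by_cases h0 : (i:ℕ) = 0
        · rw [if_pos h0]; exact hsuccval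
        · rw [if_neg h0]
          have h1 : (0:ℝ) < ((m - (i:ℕ) : ℕ) : ℝ) := by exact_mod_cast hkpos
          have h2 : ((m - (i:ℕ) : ℕ) : ℝ) < ((m + 1 - (i:ℕ) : ℕ) : ℝ) := by
            exact_mod_cast (by omega : m - (i:ℕ) < m + 1 - (i:ℕ))
          have := one_div_lt_one_div_of_lt h1 h2
          linarith
      rw [if_neg (not_le.2 hYX)]
      exact hsuccval
end
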